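/- arXiv:alg-geom/9610014 — 5 statements merged into one kernel-verified Lean document; each statement's English description precedes it below -/
import Mathlib

section
/- Let g = 0, n ≥ 1, α ∈ (0,1/2)^n. Suppose (d,e) and (d',e') are pairs with e, e' ∈ {0,1}^n, d, d' ∈ ℤ, both satisfying: n + 2d + |e| - 1 = 0 (resp. n + 2d' + |e'| - 1 = 0) and -Σ_i β_i(α,e) < d (resp. -Σ_i β_i(α,e') < d'), where β_i(α,e) = e_i + (-1)^{e_i}α_i. Then (d,e) = (d',e'). -/
/-!
Put `t_i := (1 + e_i)/2 - β_i(α,e)`, which is `1/2 - α_i` if `e_i = 0` and `α_i` if `e_i = 1`,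
so `t_i > 0`. Eliminating `d` between the vanishing of the index and (3a) gives `∑ t_i < 1/2`.
At an index where `e` and `e'` differ, `t_i + t'_i = 1/2`, so two such indices would force
`∑ t_i + ∑ t'_i ≥ 1`: they differ in at most one index. But the vanishing of the index fixes
the parity of `|e|` to that of `n - 1`, so they cannot differ in exactly one index either.
-/

open Finset

namespace ParabolicHiggs

variable {ι : Type*} {α : ι → ℝ} {e e' : ι → ℕ}

/-- The paper's `β_i(α,e)`. -/
def beta (α : ι → ℝ) (e : ι → ℕ) (i : ι) : ℝ := e i + (-1) ^ e i * α i

noncomputable def slack (α : ι → ℝ) (e : ι → ℕ) (i : ι) : ℝ := (1 + e i) / 2 - beta α e i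

lemma slack_pos {i : ι} (hα : 0 < α i ∧ α i < 1 / 2) (he : e i ≤ 1) : 0 < slack α e i := by
  interval_cases h : e i <;> simp only [slack, beta, h] <;> push_cast <;> linarith

lemma slack_add_slack_of_ne {i : ι} (he : e i ≤ 1) (he' : e' i ≤ 1) (hne : e i ≠ e' i) :
    slack α e i + slack α e' i = 1 / 2 := by
  obtain ⟨h, h'⟩ | ⟨h, h'⟩ : e i = 0 ∧ e' i = 1 ∨ e i = 1 ∧ e' i = 0 := by omega
  all_goals simp only [slack, beta, h, h']; push_cast; ring

lemma sum_slack_lt_half [Fintype ι] {d : ℤ}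
    (hlam : (Fintype.card ι : ℤ) + 2 * d + ∑ i, (e i : ℤ) - 1 = 0)
    (hlow : -∑ i, beta α e i < d) : ∑ i, slack α e i < 1 / 2 := by
  have hlamR : (Fintype.card ι : ℝ) + 2 * d + ∑ i, (e i : ℝ) - 1 = 0 := by exact_mod_cast hlam
  have hsum : ∑ i, slack α e i = (Fintype.card ι + ∑ i, (e i : ℝ)) / 2 - ∑ i, beta α e i := by
    simp only [slack, sum_sub_distrib, ← sum_div, sum_add_distrib, sum_const, card_univ,
      nsmul_eq_mul, mul_one]
  linarith

lemma eq_of_ne_of_ne_of_sum_slack_lt_half [Fintype ι] (hα : ∀ i, 0 < α i ∧ α i < 1 / 2)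
    (he : ∀ i, e i ≤ 1) (he' : ∀ i, e' i ≤ 1)
    (hs : ∑ i, slack α e i < 1 / 2) (hs' : ∑ i, slack α e' i < 1 / 2)
    {i j : ι} (hi : e i ≠ e' i) (hj : e j ≠ e' j) : i = j := by
  classical
  by_contra hij
  have hpair : ∑ k ∈ {i, j}, (slack α e k + slack α e' k) ≤ ∑ k, (slack α e k + slack α e' k) :=
    sum_le_sum_of_subset_of_nonneg (subset_univ _) fun k _ _ =>
      (add_pos (slack_pos (hα k) (he k)) (slack_pos (hα k) (he' k))).le
  rw [sum_pair hij, slack_add_slack_of_ne (he i) (he' i) hi,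
    slack_add_slack_of_ne (he j) (he' j) hj, sum_add_distrib] at hpair
  linarith

end ParabolicHiggs

lemma Fintype.sum_sub_sum_eq_sub_of_forall_ne {ι G : Type*} [Fintype ι] [AddCommGroup G]
    {f g : ι → G} (i : ι) (h : ∀ j ≠ i, f j = g j) : ∑ j, f j - ∑ j, g j = f i - g i := by
  rw [← Finset.sum_sub_distrib, Fintype.sum_eq_single i fun j hj => by rw [h j hj, sub_self]]

open ParabolicHiggs in
theorem stmt_2_general (n : ℕ) (α : Fin n → ℝ)
    (hα : ∀ i, 0 < α i ∧ α i < 1/2)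
    (e e' : Fin n → ℕ) (he : ∀ i, e i ≤ 1) (he' : ∀ i, e' i ≤ 1)
    (d d' : ℤ)
    (hlam : (n : ℤ) + 2 * d + (∑ i, (e i : ℤ)) - 1 = 0)
    (hlam' : (n : ℤ) + 2 * d' + (∑ i, (e' i : ℤ)) - 1 = 0)
    (hlow : -(∑ i, ((e i : ℝ) + (-1 : ℝ) ^ (e i) * α i)) < (d : ℝ))
    (hlow' : -(∑ i, ((e' i : ℝ) + (-1 : ℝ) ^ (e' i) * α i)) < (d' : ℝ)) :
    d = d' ∧ e = e' := by
  have hs := sum_slack_lt_half (by rwa [Fintype.card_fin]) hlow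
  have hs' := sum_slack_lt_half (by rwa [Fintype.card_fin]) hlow'
  have he_eq : e = e' := by
    by_contra hne
    obtain ⟨i, hi⟩ := Function.ne_iff.mp hne
    have hrest : ∀ j ≠ i, (e j : ℤ) = e' j := fun j hji => by
      by_contra hj
      exact hji (eq_of_ne_of_ne_of_sum_slack_lt_half hα he he' hs hs' (by exact_mod_cast hj) hi)
    have hdiff := Fintype.sum_sub_sum_eq_sub_of_forall_ne i hrest
    have := he i
    have := he' i
    omega
  subst he_eq
  exact ⟨by omega, rfl⟩

/-- Genus 0: uniqueness of the pair (d,e) with vanishing Morse index satisfying (3a). -/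
theorem stmt_2 (n : ℕ) (hn : 1 ≤ n) (α : Fin n → ℝ)
    (hα : ∀ i, 0 < α i ∧ α i < 1/2)
    (e e' : Fin n → ℕ) (he : ∀ i, e i ≤ 1) (he' : ∀ i, e' i ≤ 1)
    (d d' : ℤ)
    (hlam : (n : ℤ) + 2 * d + (∑ i, (e i : ℤ)) - 1 = 0)
    (hlam' : (n : ℤ) + 2 * d' + (∑ i, (e' i : ℤ)) - 1 = 0)
    (hlow : -(∑ i, ((e i : ℝ) + (-1 : ℝ) ^ (e i) * α i)) < (d : ℝ))
    (hlow' : -(∑ i, ((e' i : ℝ) + (-1 : ℝ) ^ (e' i) * α i)) < (d' : ℝ)) :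
    d = d' ∧ e = e' :=
  stmt_2_general n α hα e e' he he' d d' hlam hlam' hlow hlow'
end

section
/- Let n ≥ 1, α ∈ (0,1/2)^n, and e ∈ {0,1}^n with n + |e| - 1 even, where |e| = Σ_i e_i. Write β_i(α,e) = e_i + (-1)^{e_i}α_i and suppose Σ_i β_i(α,e) > (n+|e|-1)/2 (i.e. α lies in the null chamber C_{d,e} with d = (1-n-|e|)/2). Then there is no e' ∈ {0,1}^n with Σ_i (-1)^{e'_i}α_i ∈ ℤ. -/
/-- If α lies in the null chamber C_{d,e} (with n+|e|-1 even), then no wall passes through α: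
there is no e' ∈ {0,1}^n with Σ (-1)^{e'_i} α_i an integer. -/
theorem stmt_3 (n : ℕ) (hn : 1 ≤ n) (α : Fin n → ℝ)
    (hα : ∀ i, 0 < α i ∧ α i < 1/2)
    (e : Fin n → ℕ) (he : ∀ i, e i ≤ 1)
    (heven : Even (n + (∑ i, e i) - 1))
    (hnull : ((n : ℝ) + (∑ i, (e i : ℝ)) - 1) / 2 <
      ∑ i, ((e i : ℝ) + (-1 : ℝ) ^ (e i) * α i)) :
    ¬ ∃ e' : Fin n → ℕ, (∀ i, e' i ≤ 1) ∧
      ∃ k : ℤ, ∑ i, (-1 : ℝ) ^ (e' i) * α i = (k : ℝ) := by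
  rintro ⟨e', he', k, hk⟩
  obtain ⟨t, ht⟩ := heven
  set S : ℕ := ∑ i, e i with hS
  have hSn : S ≤ n := by
    calc S ≤ ∑ _i : Fin n, 1 := Finset.sum_le_sum fun i _ => he i
    _ = n := by simp
  set s : ℝ := ∑ i, (-1:ℝ)^(e i) * α i with hs
  have hcast : ((S : ℕ) : ℝ) = ∑ i, (e i : ℝ) := by rw [hS]; push_cast; rfl
  -- null condition: s > t - S (as reals)
  have hnull' : ((t:ℝ) - S) < s := by
    have hsum : ∑ i, ((e i : ℝ) + (-1 : ℝ) ^ (e i) * α i)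
        = (∑ i, (e i : ℝ)) + s := Finset.sum_add_distrib
    have h2t : (n : ℝ) + (S : ℝ) - 1 = (t : ℝ) + t := by
      have : (n : ℤ) + S - 1 = (t : ℤ) + t := by
        have := ht
        omega
      exact_mod_cast this
    rw [hsum, ← hcast] at hnull
    linarith
  -- the two counting functions
  set aN : ℕ := (Finset.univ.filter fun i : Fin n => e i = 0 ∧ e' i = 1).card with haN
  set pN : ℕ := (Finset.univ.filter fun i : Fin n => e i = 0 ∧ e' i = 0).card with hpN
  have hF : ∑ i, (if e i = 0 ∧ e' i = 1 then (1:ℝ) else 0) = (aN : ℝ) := by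
    rw [haN, Finset.sum_boole]
  have hG : ∑ i, (if e i = 0 ∧ e' i = 0 then (1:ℝ) else 0) = (pN : ℝ) := by
    rw [hpN, Finset.sum_boole]
  -- s - k ≤ aN
  have hA : s - (k:ℝ) ≤ (aN : ℝ) := by
    rw [← hF, ← hk, hs, ← Finset.sum_sub_distrib]
    apply Finset.sum_le_sum
    intro i _
    have h0 := (hα i).1
    have h1 := (hα i).2
    have hei : e i = 0 ∨ e i = 1 := by have := he i; omega
    have hei' : e' i = 0 ∨ e' i = 1 := by have := he' i; omega
    rcases hei with h | h <;> rcases hei' with h' | h' <;>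
      simp [h, h'] <;> linarith
  -- s + k ≤ pN
  have hB : s + (k:ℝ) ≤ (pN : ℝ) := by
    rw [← hG, ← hk, hs, ← Finset.sum_add_distrib]
    apply Finset.sum_le_sum
    intro i _
    have h0 := (hα i).1
    have h1 := (hα i).2
    have hei : e i = 0 ∨ e i = 1 := by have := he i; omega
    have hei' : e' i = 0 ∨ e' i = 1 := by have := he' i; omega
    rcases hei with h | h <;> rcases hei' with h' | h' <;>
      simp [h, h'] <;> linarith
  -- aN + pN = n - S
  have hC : (aN : ℝ) + (pN : ℝ) = (n : ℝ) - (S : ℝ) := by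
    rw [← hF, ← hG, ← Finset.sum_add_distrib]
    have hpt : ∀ i, (if e i = 0 ∧ e' i = 1 then (1:ℝ) else 0)
        + (if e i = 0 ∧ e' i = 0 then (1:ℝ) else 0) = 1 - (e i : ℝ) := by
      intro i
      have hei : e i = 0 ∨ e i = 1 := by have := he i; omega
      have hei' : e' i = 0 ∨ e' i = 1 := by have := he' i; omega
      rcases hei with h | h <;> rcases hei' with h' | h' <;> simp [h, h']
    rw [Finset.sum_congr rfl fun i _ => hpt i, Finset.sum_sub_distrib, ← hcast]
    simp
  -- now pass to integers and derive contradiction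
  have hAZ : (t : ℤ) - S < k + aN := by
    have : ((t:ℝ) - S) < (k : ℝ) + aN := by linarith
    exact_mod_cast this
  have hBZ : (t : ℤ) - S < (pN : ℤ) - k := by
    have : ((t:ℝ) - S) < (pN : ℝ) - k := by linarith
    exact_mod_cast this
  have hCZ : (aN : ℤ) + (pN : ℤ) = (n : ℤ) - S := by exact_mod_cast hC
  have h2t : (n : ℤ) + S - 1 = (t : ℤ) + t := by
    have := ht
    omega
  omega
end

section
/- For integers g ≥ 0 and h with 0 ≤ h, the coefficient of x^h in the power series expansion of (1+xt)^{2g} / ((1-x)(1-xt^2)) equals the Poincaré polynomial P_t(S^h X) of the h-th symmetric product of a compact Riemann surface X of genus g; in particular for h > 2g-2, this coefficient, as a polynomial in t, can be computed as the negative of the residue at x=1 plus the residue at x=1/t^2 of (1+xt)^{2g} / (x^{h+1}(1-x)(1-xt^2)). -/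
/-!
Multiplying by `1 - t²` turns the coefficient of `x^b` in `1/((1-x)(1-xt²))` into
`1 - t^(2b+2)`, so `(1-t²)·P_t(S^h X) = ∑_{a ≤ h} C(2g,a) (t^a - t^(2h+2-a))`.
When `h ≥ 2g - 1` this sum runs over all `a ≤ 2g` (the term `a = h + 1` vanishes on its own),
and its two halves are `(1+t)^{2g}` and `-t^(2h+2-2g) (1+t)^{2g}`, which are `-(1-t²)` times
the residues at `x = 1` and `x = 1/t²`.
-/

/-- Macdonald's generating function for the Poincaré polynomials of symmetric products
of a genus-g curve: F(x) = (1+xt)^{2g} / ((1-x)(1-xt²)), as a power series in x with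
polynomial coefficients in t. -/
noncomputable def macdonaldF (g : ℕ) : PowerSeries (Polynomial ℚ) :=
  (1 + PowerSeries.X * PowerSeries.C (Polynomial.X : Polynomial ℚ)) ^ (2 * g) *
    PowerSeries.mk (fun _ => (1 : Polynomial ℚ)) *
    PowerSeries.mk (fun m => (Polynomial.X : Polynomial ℚ) ^ (2 * m))

open PowerSeries

section
variable {R : Type*} [CommRing R]

theorem PowerSeries.coeff_one_add_X_mul_C_pow (t : R) (n a : ℕ) :
    coeff a ((1 + X * C t) ^ n) = n.choose a * t ^ a := by
  have : (1 + X * C t) ^ n = rescale t (((1 + Polynomial.X) ^ n : Polynomial R) : R⟦X⟧) := by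
    simp [rescale_X, mul_comm]
  rw [this, coeff_rescale, Polynomial.coeff_coe, Polynomial.coeff_one_add_X_pow, mul_comm]

theorem PowerSeries.coeff_mk_one_mul_mk_pow (u : R) (m : ℕ) :
    coeff m (mk (fun _ => (1 : R)) * mk (u ^ ·)) = ∑ c ∈ Finset.range (m + 1), u ^ c := by
  simp only [coeff_mul, coeff_mk, one_mul]
  rw [← Finset.Nat.sum_antidiagonal_swap, Finset.Nat.sum_antidiagonal_eq_sum_range_succ_mk]
  rfl

theorem one_sub_sq_mul_coeff_eq_sum_choose (t : R) (n h : ℕ) :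
    (1 - t ^ 2) * coeff h
        ((1 + X * C t) ^ n * mk (fun _ => (1 : R)) * mk (fun m => t ^ (2 * m))) =
      ∑ a ∈ Finset.range (h + 1), n.choose a * (t ^ a - t ^ (2 * h + 2 - a)) := by
  simp_rw [pow_mul]
  rw [mul_assoc, coeff_mul, Finset.Nat.sum_antidiagonal_eq_sum_range_succ_mk, Finset.mul_sum]
  refine Finset.sum_congr rfl fun a ha => ?_
  have ha : a ≤ h := Nat.lt_succ_iff.mp (Finset.mem_range.mp ha)
  rw [coeff_mk_one_mul_mk_pow, coeff_one_add_X_mul_C_pow, mul_left_comm, mul_neg_geom_sum]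
  dsimp only
  rw [show 2 * h + 2 - a = a + 2 * (h - a + 1) by omega, ← pow_mul]
  ring

theorem sum_range_choose_mul_pow_sub_pow (t : R) {n h : ℕ} (hn : n ≤ h + 1) :
    ∑ a ∈ Finset.range (h + 1), n.choose a * (t ^ a - t ^ (2 * h + 2 - a)) =
      (1 + t) ^ n * (1 - t ^ (2 * h + 2 - n)) := by
  have hsupp : ∑ a ∈ Finset.range (h + 1), n.choose a * (t ^ a - t ^ (2 * h + 2 - a)) =
      ∑ a ∈ Finset.range (n + 1), n.choose a * (t ^ a - t ^ (2 * h + 2 - a)) := by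
    rw [← Finset.sum_range_succ_sub_top, show 2 * h + 2 - (h + 1) = h + 1 by omega, sub_self,
      mul_zero, sub_zero]
    refine (Finset.sum_subset (Finset.range_subset_range.mpr (by omega)) fun a _ ha => ?_).symm
    rw [Nat.choose_eq_zero_of_lt (by simpa using ha), Nat.cast_zero, zero_mul]
  have hbinom : ∑ a ∈ Finset.range (n + 1), (n.choose a : R) * t ^ a = (1 + t) ^ n := by
    simp [add_comm 1 t, add_pow, mul_comm]
  have hreflect : ∑ a ∈ Finset.range (n + 1), (n.choose a : R) * t ^ (2 * h + 2 - a) =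
      t ^ (2 * h + 2 - n) * (1 + t) ^ n := by
    rw [add_pow, Finset.mul_sum]
    refine Finset.sum_congr rfl fun a ha => ?_
    have ha : a ≤ n := Nat.lt_succ_iff.mp (Finset.mem_range.mp ha)
    rw [one_pow, one_mul, ← mul_assoc, ← pow_add, mul_comm,
      show 2 * h + 2 - n + (n - a) = 2 * h + 2 - a by omega]
  simp_rw [hsupp, mul_sub, Finset.sum_sub_distrib, hreflect, hbinom]
  ring

end

/-- For h > 2g-2, the coefficient of x^h in (1+xt)^{2g}/((1-x)(1-xt²)) — i.e. the Poincaré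
polynomial P_t(S^h X) of the h-th symmetric product of a genus-g curve — is given by the
residue computation: it equals (1+t)^{2g}(1 + t² + ⋯ + t^{2(h-g)}), equivalently
(1-t²)·P_t(S^h X) = (1+t)^{2g}(1 - t^{2h+2-2g}). -/
theorem stmt_6 (g h : ℕ) (hh : 2 * (g : ℤ) - 2 < (h : ℤ)) :
    PowerSeries.coeff h (macdonaldF g) =
      (1 + Polynomial.X) ^ (2 * g) * ∑ j ∈ Finset.range (h + 1 - g), Polynomial.X ^ (2 * j) ∧
    (1 - Polynomial.X ^ 2) * PowerSeries.coeff h (macdonaldF g) =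
      (1 + Polynomial.X) ^ (2 * g) * (1 - Polynomial.X ^ (2 * h + 2 - 2 * g)) := by
  have key : (1 - Polynomial.X ^ 2) * coeff h (macdonaldF g) =
      (1 + Polynomial.X) ^ (2 * g) * (1 - Polynomial.X ^ (2 * h + 2 - 2 * g)) :=
    (one_sub_sq_mul_coeff_eq_sum_choose _ _ _).trans
      (sum_range_choose_mul_pow_sub_pow _ (by omega))
  have hne : (1 - Polynomial.X ^ 2 : Polynomial ℚ) ≠ 0 := fun h0 => by
    simpa using congrArg (Polynomial.eval 0) h0
  refine ⟨mul_left_cancel₀ hne ?_, key⟩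
  simp_rw [key, mul_left_comm _ ((1 + Polynomial.X) ^ (2 * g)), pow_mul, mul_neg_geom_sum,
    ← pow_mul, show 2 * (h + 1 - g) = 2 * h + 2 - 2 * g by omega]
end

section
/- Let g ≥ 0, n ≥ 1, and let P(t) = [ (1+t^3)^{2g}(1+t^2)^{n-1} + 2^{n-1} t^{2n+4g-3}(1+t)^{2g}((2g-1)t - 2g) ] / (1-t^2)^2 - 2^{n-2}(n-1) t^{2n+4g-4}(1+t)^{2g}/(1-t^2) + 2^{n-1}(2^{2g}-1) t^{4g+2n-4}(1+t)^{2g-2} (interpreted as a polynomial after cancellation). Then P(-1) = (n-1)(n-2)2^{n-4} if g = 0, P(-1) = 3·2^n if g = 1, and P(-1) = 0 if g ≥ 2. -/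
open Polynomial

theorem aux_case01 (P : Polynomial ℚ)
    (hP : algebraMap (Polynomial ℚ) (RatFunc ℚ) P =
      ((1 + RatFunc.X ^ 3) ^ (2 * 0) * (1 + RatFunc.X ^ 2) ^ ((1:ℕ) - 1) +
          RatFunc.C (2 ^ ((1:ℕ) - 1) : ℚ) * RatFunc.X ^ (2 * ((1 : ℕ) : ℤ) + 4 * ((0:ℕ) : ℤ) - 3) *
            (1 + RatFunc.X) ^ (2 * 0) *
            (RatFunc.C (2 * ((0:ℕ) : ℚ) - 1) * RatFunc.X - RatFunc.C (2 * ((0:ℕ) : ℚ)))) /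
          (1 - RatFunc.X ^ 2) ^ 2 -
        RatFunc.C ((2 : ℚ) ^ (((1:ℕ) : ℤ) - 2) * (((1:ℕ) : ℚ) - 1)) *
          RatFunc.X ^ (2 * ((1:ℕ) : ℤ) + 4 * ((0:ℕ) : ℤ) - 4) * (1 + RatFunc.X) ^ (2 * 0) /
          (1 - RatFunc.X ^ 2) +
        RatFunc.C ((2 : ℚ) ^ ((1:ℕ) - 1) * ((2 : ℚ) ^ (2 * 0) - 1)) *
          RatFunc.X ^ (4 * ((0:ℕ) : ℤ) + 2 * ((1:ℕ) : ℤ) - 4) *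
          (1 + RatFunc.X) ^ (2 * ((0:ℕ) : ℤ) - 2)) :
    P = 0 := by
  have inj : Function.Injective (algebraMap (Polynomial ℚ) (RatFunc ℚ)) :=
    IsFractionRing.injective _ _
  apply inj
  rw [map_zero, hP]
  have hX : (RatFunc.X : RatFunc ℚ) ≠ 0 := RatFunc.X_ne_zero
  norm_num
  left
  rw [inv_mul_cancel₀ hX]
  ring


theorem case0 (m : ℕ) (P : Polynomial ℚ)
    (hP : algebraMap (Polynomial ℚ) (RatFunc ℚ) P =
      ((1 + RatFunc.X ^ 3) ^ (2 * 0) * (1 + RatFunc.X ^ 2) ^ ((m+2) - 1) +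
          RatFunc.C (2 ^ ((m+2) - 1) : ℚ) * RatFunc.X ^ (2 * ((m+2 : ℕ) : ℤ) + 4 * ((0:ℕ) : ℤ) - 3) *
            (1 + RatFunc.X) ^ (2 * 0) *
            (RatFunc.C (2 * ((0:ℕ) : ℚ) - 1) * RatFunc.X - RatFunc.C (2 * ((0:ℕ) : ℚ)))) /
          (1 - RatFunc.X ^ 2) ^ 2 -
        RatFunc.C ((2 : ℚ) ^ (((m+2:ℕ) : ℤ) - 2) * (((m+2:ℕ) : ℚ) - 1)) *
          RatFunc.X ^ (2 * ((m+2:ℕ) : ℤ) + 4 * ((0:ℕ) : ℤ) - 4) * (1 + RatFunc.X) ^ (2 * 0) /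
          (1 - RatFunc.X ^ 2) +
        RatFunc.C ((2 : ℚ) ^ ((m+2) - 1) * ((2 : ℚ) ^ (2 * 0) - 1)) *
          RatFunc.X ^ (4 * ((0:ℕ) : ℤ) + 2 * ((m+2:ℕ) : ℤ) - 4) *
          (1 + RatFunc.X) ^ (2 * ((0:ℕ) : ℤ) - 2)) :
    P.eval (-1) = ((m:ℚ) + 1) * (m:ℚ) * (2 : ℚ) ^ ((m : ℤ) - 2) := by
  have inj : Function.Injective (algebraMap (Polynomial ℚ) (RatFunc ℚ)) :=
    IsFractionRing.injective _ _
  rw [show ((2 : ℚ) ^ ((m+2) - 1) * ((2 : ℚ) ^ (2 * 0) - 1)) = 0 by norm_num] at hP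
  rw [show (2 * ((m+2 : ℕ) : ℤ) + 4 * ((0:ℕ) : ℤ) - 3) = ((2*m+1 : ℕ) : ℤ) by push_cast; ring,
      show (2 * ((m+2:ℕ) : ℤ) + 4 * ((0:ℕ) : ℤ) - 4) = ((2*m : ℕ) : ℤ) by push_cast; ring] at hP
  simp only [zpow_natCast, Nat.add_sub_cancel, map_zero, zero_mul] at hP
  set q4 : ℚ := (2 : ℚ) ^ (((m+2:ℕ) : ℤ) - 2) * (((m+2:ℕ) : ℚ) - 1) with hq4
  have hX2 : (1 - RatFunc.X ^ 2 : RatFunc ℚ) ≠ 0 := by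
    intro h0
    have h : ((1 - X ^ 2 : Polynomial ℚ)) ≠ 0 := by
      intro h; have := congrArg (Polynomial.eval 0) h; simp at this
    apply h
    apply inj
    simpa [map_sub, map_pow, RatFunc.algebraMap_X] using h0
  have key : P * (1 - X^2)^2 =
      (1 + X^2)^(m+1) - C ((2:ℚ)^(m+1)) * X^(2*m+2) - C q4 * X^(2*m) * (1 - X^2) := by
    apply inj
    rw [map_mul, hP]
    simp only [map_add, map_sub, map_mul, map_pow, map_one, map_ofNat, RatFunc.algebraMap_X,
      RatFunc.algebraMap_C]
    simp only [show m + 2 - 1 = m + 1 by omega, Nat.cast_zero, mul_zero, zero_sub, map_zero,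
      zero_mul, sub_zero, add_zero]
    field_simp
    ring
  rcases m with _ | j
  · -- m = 0
    have hq4' : q4 = 1 := by rw [hq4]; norm_num
    rw [hq4'] at key
    norm_num [map_ofNat] at key
    have hne : ((1 - X^2 : Polynomial ℚ))^2 ≠ 0 := by
      intro h
      have := congrArg (Polynomial.eval 0) h; simp at this
    have hP0 : P = 0 := by
      have : P * (1 - X^2)^2 = 0 * (1 - X^2)^2 := by rw [zero_mul]; linear_combination key
      exact mul_right_cancel₀ hne this
    rw [hP0]
    norm_num
  · -- m = j + 1
    have hq4' : q4 = 2^(j+1) * ((j:ℚ)+2) := by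
      rw [hq4]
      rw [show (((j+1+2:ℕ)):ℤ) - 2 = ((j+1:ℕ):ℤ) by push_cast; ring, zpow_natCast]
      push_cast
      ring
    rw [hq4'] at key
    have key' : P * (1 - X^2)^2 =
        (1 + X^2)^(j+2) - C ((2:ℚ)^(j+1+1)) * X^(2*j+4)
          - C ((2:ℚ)^(j+1) * ((j:ℚ)+2)) * X^(2*j+2) * (1 - X^2) := by
      linear_combination key
    have E := congrArg (fun p : Polynomial ℚ =>
      Polynomial.eval (-1 : ℚ) (derivative (derivative p))) key'
    simp only [derivative_mul, derivative_pow, derivative_add, derivative_sub, derivative_one,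
      derivative_X, derivative_C, derivative_X_pow, derivative_zero, eval_zero, Nat.add_sub_cancel,
      eval_mul, eval_add, eval_sub, eval_pow, eval_one, eval_X, eval_C, eval_natCast,
      eval_ofNat] at E
    simp only [show j+2-1 = j+1 by omega, show j+2-1-1 = j by omega,
      show 2*j+4-1 = 2*j+3 by omega, show 2*j+4-1-1 = 2*j+2 by omega,
      show 2*j+2-1 = 2*j+1 by omega, show 2*j+2-1-1 = 2*j by omega] at E
    have p1 : ((-1:ℚ))^(2*j+3) = -1 := Odd.neg_one_pow ⟨j+1, by ring⟩
    have p2 : ((-1:ℚ))^(2*j+2) = 1 := Even.neg_one_pow ⟨j+1, by ring⟩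
    have p3 : ((-1:ℚ))^(2*j+1) = -1 := Odd.neg_one_pow ⟨j, by ring⟩
    have p4 : ((-1:ℚ))^(2*j) = 1 := Even.neg_one_pow ⟨j, by ring⟩
    have p5 : ((-1:ℚ))^(2*j+4) = 1 := Even.neg_one_pow ⟨j+2, by ring⟩
    simp only [p1, p2, p3, p4, p5] at E
    norm_num at E
    rw [show (((j+1:ℕ):ℤ)) - 2 = ((j:ℤ)) - 1 by push_cast; ring]
    rw [show ((j:ℤ)) - 1 = ((j:ℕ):ℤ) - (1:ℤ) by norm_num, zpow_sub₀ (by norm_num : (2:ℚ) ≠ 0),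
      zpow_natCast, zpow_one]
    push_cast at E ⊢
    rw [p2] at E
    linear_combination E / 8


theorem case1 (m : ℕ) (P : Polynomial ℚ)
    (hP : algebraMap (Polynomial ℚ) (RatFunc ℚ) P =
      ((1 + RatFunc.X ^ 3) ^ (2 * 1) * (1 + RatFunc.X ^ 2) ^ ((m+1) - 1) +
          RatFunc.C (2 ^ ((m+1) - 1) : ℚ) * RatFunc.X ^ (2 * ((m+1 : ℕ) : ℤ) + 4 * ((1:ℕ) : ℤ) - 3) *
            (1 + RatFunc.X) ^ (2 * 1) *
            (RatFunc.C (2 * ((1:ℕ) : ℚ) - 1) * RatFunc.X - RatFunc.C (2 * ((1:ℕ) : ℚ)))) /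
          (1 - RatFunc.X ^ 2) ^ 2 -
        RatFunc.C ((2 : ℚ) ^ (((m+1:ℕ) : ℤ) - 2) * (((m+1:ℕ) : ℚ) - 1)) *
          RatFunc.X ^ (2 * ((m+1:ℕ) : ℤ) + 4 * ((1:ℕ) : ℤ) - 4) * (1 + RatFunc.X) ^ (2 * 1) /
          (1 - RatFunc.X ^ 2) +
        RatFunc.C ((2 : ℚ) ^ ((m+1) - 1) * ((2 : ℚ) ^ (2 * 1) - 1)) *
          RatFunc.X ^ (4 * ((1:ℕ) : ℤ) + 2 * ((m+1:ℕ) : ℤ) - 4) *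
          (1 + RatFunc.X) ^ (2 * ((1:ℕ) : ℤ) - 2)) :
    P.eval (-1) = 3 * 2 ^ (m+1) := by
  have inj : Function.Injective (algebraMap (Polynomial ℚ) (RatFunc ℚ)) :=
    IsFractionRing.injective _ _
  -- clean exponents
  rw [show (2 * ((m+1 : ℕ) : ℤ) + 4 * ((1:ℕ) : ℤ) - 3) = ((2*m+3 : ℕ) : ℤ) by push_cast; ring,
      show (2 * ((m+1:ℕ) : ℤ) + 4 * ((1:ℕ) : ℤ) - 4) = ((2*m+2 : ℕ) : ℤ) by push_cast; ring,
      show (4 * ((1:ℕ) : ℤ) + 2 * ((m+1:ℕ) : ℤ) - 4) = ((2*m+2 : ℕ) : ℤ) by push_cast; ring,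
      show (2 * ((1:ℕ) : ℤ) - 2) = (0 : ℤ) by norm_num,
      zpow_zero] at hP
  simp only [zpow_natCast] at hP
  set c3 : ℚ := (2 : ℚ) ^ (((m+1:ℕ) : ℤ) - 2) * (((m+1:ℕ) : ℚ) - 1) with hc3
  have hX2 : (1 - RatFunc.X ^ 2 : RatFunc ℚ) ≠ 0 := by
    intro h0
    have h : ((1 - X ^ 2 : Polynomial ℚ)) ≠ 0 := by
      intro h; have := congrArg (Polynomial.eval 0) h; simp at this
    apply h
    apply inj
    simpa [map_sub, map_pow, RatFunc.algebraMap_X] using h0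
  have key : P * (1 - X^2)^2 =
      (1 + X^3)^2 * (1 + X^2)^m + C ((2:ℚ)^m) * X^(2*m+3) * (1+X)^2 * (X - C 2)
        - C c3 * X^(2*m+2) * (1+X)^2 * (1 - X^2)
        + C ((2:ℚ)^m * 3) * X^(2*m+2) * (1 - X^2)^2 := by
    apply inj
    rw [map_mul, hP]
    simp only [map_add, map_sub, map_mul, map_pow, map_one, map_ofNat, RatFunc.algebraMap_X,
      RatFunc.algebraMap_C, Nat.add_sub_cancel]
    norm_num
    field_simp
  have h1x : ((1 + X : Polynomial ℚ))^2 ≠ 0 := by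
    intro h; have := congrArg (Polynomial.eval 0) h; simp at this
  have key2 : P * (1 - X)^2 =
      (1 - X + X^2)^2 * (1 + X^2)^m + C ((2:ℚ)^m) * X^(2*m+3) * (X - C 2)
        - C c3 * X^(2*m+2) * (1+X) * (1-X)
        + C ((2:ℚ)^m * 3) * X^(2*m+2) * (1-X)^2 := by
    apply mul_right_cancel₀ h1x
    linear_combination key
  have := congrArg (Polynomial.eval (-1 : ℚ)) key2
  simp only [eval_mul, eval_add, eval_sub, eval_pow, eval_one, eval_X, eval_C, eval_ofNat] at this
  have hodd : ((-1:ℚ))^(2*m+3) = -1 := Odd.neg_one_pow ⟨m+1, by ring⟩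
  have heven : ((-1:ℚ))^(2*m+2) = 1 := Even.neg_one_pow ⟨m+1, by ring⟩
  rw [hodd, heven] at this
  norm_num at this
  rw [pow_succ]
  linarith


theorem case2 (k m : ℕ) (P : Polynomial ℚ)
    (hP : algebraMap (Polynomial ℚ) (RatFunc ℚ) P =
      ((1 + RatFunc.X ^ 3) ^ (2 * (k+2)) * (1 + RatFunc.X ^ 2) ^ ((m+1) - 1) +
          RatFunc.C (2 ^ ((m+1) - 1) : ℚ) * RatFunc.X ^ (2 * ((m+1 : ℕ) : ℤ) + 4 * ((k+2:ℕ) : ℤ) - 3) *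
            (1 + RatFunc.X) ^ (2 * (k+2)) *
            (RatFunc.C (2 * ((k+2:ℕ) : ℚ) - 1) * RatFunc.X - RatFunc.C (2 * ((k+2:ℕ) : ℚ)))) /
          (1 - RatFunc.X ^ 2) ^ 2 -
        RatFunc.C ((2 : ℚ) ^ (((m+1:ℕ) : ℤ) - 2) * (((m+1:ℕ) : ℚ) - 1)) *
          RatFunc.X ^ (2 * ((m+1:ℕ) : ℤ) + 4 * ((k+2:ℕ) : ℤ) - 4) * (1 + RatFunc.X) ^ (2 * (k+2)) /
          (1 - RatFunc.X ^ 2) +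
        RatFunc.C ((2 : ℚ) ^ ((m+1) - 1) * ((2 : ℚ) ^ (2 * (k+2)) - 1)) *
          RatFunc.X ^ (4 * ((k+2:ℕ) : ℤ) + 2 * ((m+1:ℕ) : ℤ) - 4) *
          (1 + RatFunc.X) ^ (2 * ((k+2:ℕ) : ℤ) - 2)) :
    P.eval (-1) = 0 := by
  have inj : Function.Injective (algebraMap (Polynomial ℚ) (RatFunc ℚ)) :=
    IsFractionRing.injective _ _
  rw [show (2 * ((m+1 : ℕ) : ℤ) + 4 * ((k+2:ℕ) : ℤ) - 3) = ((2*m+4*k+7 : ℕ) : ℤ) by push_cast; ring,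
      show (2 * ((m+1:ℕ) : ℤ) + 4 * ((k+2:ℕ) : ℤ) - 4) = ((2*m+4*k+6 : ℕ) : ℤ) by push_cast; ring,
      show (4 * ((k+2:ℕ) : ℤ) + 2 * ((m+1:ℕ) : ℤ) - 4) = ((2*m+4*k+6 : ℕ) : ℤ) by push_cast; ring,
      show (2 * ((k+2:ℕ) : ℤ) - 2) = ((2*k+2 : ℕ) : ℤ) by push_cast; ring] at hP
  simp only [zpow_natCast, Nat.add_sub_cancel] at hP
  set q1 : ℚ := (2:ℚ) ^ m with hq1
  set q2 : ℚ := 2 * ((k+2:ℕ) : ℚ) - 1 with hq2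
  set q3 : ℚ := 2 * ((k+2:ℕ) : ℚ) with hq3
  set q4 : ℚ := (2 : ℚ) ^ (((m+1:ℕ) : ℤ) - 2) * (((m+1:ℕ) : ℚ) - 1) with hq4
  set q5 : ℚ := (2 : ℚ) ^ m * ((2 : ℚ) ^ (2 * (k+2)) - 1) with hq5
  have hX2 : (1 - RatFunc.X ^ 2 : RatFunc ℚ) ≠ 0 := by
    intro h0
    have h : ((1 - X ^ 2 : Polynomial ℚ)) ≠ 0 := by
      intro h; have := congrArg (Polynomial.eval 0) h; simp at this
    apply h
    apply inj
    simpa [map_sub, map_pow, RatFunc.algebraMap_X] using h0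
  have key : P * (1 - X^2)^2 =
      (1 + X^3)^(2*(k+2)) * (1 + X^2)^m
        + C q1 * X^(2*m+4*k+7) * (1+X)^(2*(k+2)) * (C q2 * X - C q3)
        - C q4 * X^(2*m+4*k+6) * (1+X)^(2*(k+2)) * (1 - X^2)
        + C q5 * X^(2*m+4*k+6) * (1+X)^(2*k+2) * (1 - X^2)^2 := by
    apply inj
    rw [map_mul, hP]
    simp only [map_add, map_sub, map_mul, map_pow, map_one, map_ofNat, RatFunc.algebraMap_X,
      RatFunc.algebraMap_C]
    field_simp
  have h1x : ((1 + X : Polynomial ℚ))^2 ≠ 0 := by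
    intro h; have := congrArg (Polynomial.eval 0) h; simp at this
  rw [show ((1:Polynomial ℚ) + X^3) = (1+X)*(1-X+X^2) by ring, mul_pow] at key
  have key2 : P * (1 - X)^2 =
      (1+X)^(2*k+2) * ((1 - X + X^2)^(2*(k+2)) * (1 + X^2)^m
        + C q1 * X^(2*m+4*k+7) * (C q2 * X - C q3)
        - C q4 * X^(2*m+4*k+6) * (1 - X) * (1+X)
        + C q5 * X^(2*m+4*k+6) * (1-X)^2) := by
    apply mul_right_cancel₀ h1x
    linear_combination key
  have := congrArg (Polynomial.eval (-1 : ℚ)) key2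
  simp only [eval_mul, eval_add, eval_sub, eval_pow, eval_one, eval_X, eval_C] at this
  rw [show ((1:ℚ) + -1) = 0 by norm_num, zero_pow (by omega : 2*k+2 ≠ 0)] at this
  norm_num at this
  linarith


/-- The Euler characteristic of the moduli space of rank-two fixed-determinant parabolic
Higgs bundles: if P is the polynomial equal (as a rational function) to the stated
Poincaré polynomial expression, then P(-1) = (n-1)(n-2)2^{n-4} for g=0, 3·2^n for g=1,
and 0 for g ≥ 2. -/
theorem stmt_9 (g n : ℕ) (hn : 1 ≤ n) (P : Polynomial ℚ)
    (hP : algebraMap (Polynomial ℚ) (RatFunc ℚ) P =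
      ((1 + RatFunc.X ^ 3) ^ (2 * g) * (1 + RatFunc.X ^ 2) ^ (n - 1) +
          RatFunc.C (2 ^ (n - 1) : ℚ) * RatFunc.X ^ (2 * (n : ℤ) + 4 * (g : ℤ) - 3) *
            (1 + RatFunc.X) ^ (2 * g) *
            (RatFunc.C (2 * (g : ℚ) - 1) * RatFunc.X - RatFunc.C (2 * (g : ℚ)))) /
          (1 - RatFunc.X ^ 2) ^ 2 -
        RatFunc.C ((2 : ℚ) ^ ((n : ℤ) - 2) * ((n : ℚ) - 1)) *
          RatFunc.X ^ (2 * (n : ℤ) + 4 * (g : ℤ) - 4) * (1 + RatFunc.X) ^ (2 * g) /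
          (1 - RatFunc.X ^ 2) +
        RatFunc.C ((2 : ℚ) ^ (n - 1) * ((2 : ℚ) ^ (2 * g) - 1)) *
          RatFunc.X ^ (4 * (g : ℤ) + 2 * (n : ℤ) - 4) *
          (1 + RatFunc.X) ^ (2 * (g : ℤ) - 2)) :
    (g = 0 → P.eval (-1) = ((n : ℚ) - 1) * ((n : ℚ) - 2) * (2 : ℚ) ^ ((n : ℤ) - 4)) ∧
    (g = 1 → P.eval (-1) = 3 * 2 ^ n) ∧
    (2 ≤ g → P.eval (-1) = 0) := by
  refine ⟨?_, ?_, ?_⟩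
  · rintro rfl
    rcases eq_or_lt_of_le hn with h1 | h2
    · obtain rfl : n = 1 := h1.symm
      rw [aux_case01 P hP]
      norm_num
    · obtain ⟨m, rfl⟩ : ∃ m, n = m + 2 := ⟨n - 2, by omega⟩
      rw [case0 m P hP]
      rw [show ((m+2:ℕ) : ℤ) - 4 = (m : ℤ) - 2 by push_cast; ring]
      push_cast
      ring
  · rintro rfl
    obtain ⟨m, rfl⟩ : ∃ m, n = m + 1 := ⟨n - 1, by omega⟩
    exact case1 m P hP
  · intro hg
    obtain ⟨k, rfl⟩ : ∃ k, g = k + 2 := ⟨g - 2, by omega⟩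
    obtain ⟨m, rfl⟩ : ∃ m, n = m + 1 := ⟨n - 1, by omega⟩
    exact case2 k m P hP
end

section
/- Let X = P^1 with three marked points, and for e ∈ I = {(0,0,0),(0,1,1),(1,0,1),(1,1,0)} and α ∈ W = (0,1/2)^3 define β_i(α,e) = e_i + (-1)^{e_i}α_i and the chambers C_e = {α : Σβ_i(α,e) > 1 + |e|/2}, C_0 = {α : Σβ_i(α,e) < 1 + |e|/2 for all e ∈ I}. Then the chambers C_0 and C_e (e ∈ I) are pairwise disjoint, and their union together with the four hyperplanes H_e = {α : Σβ_i(α,e) = 1 + |e|/2} covers W. -/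
/-! Writing `d_e(α) = chamberExcess α e = Σ β_i(α,e) - (1 + |e|/2)`, one finds
`d_0 = α₁ + α₂ + α₃ - 1` and `d_e = α_i - α_j - α_k` for `e ≠ 0`, where `e_i = 0`.
The sum of any two distinct `d_e` is `2α_i - 1` or `-2α_k`, which is negative on `W`, so no two
chambers `C_e` meet. The remaining claims are trichotomy of the real order. -/

noncomputable def chamberExcess (α : Fin 3 → ℝ) (e : Fin 3 → ℕ) : ℝ :=
  ∑ i, ((e i : ℝ) + (-1 : ℝ) ^ (e i) * α i) - (1 + (∑ i, (e i : ℝ)) / 2)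

theorem chamberExcess_add_chamberExcess_neg {α : Fin 3 → ℝ} (hα : ∀ i, 0 < α i ∧ α i < 1/2)
    {e e' : Fin 3 → ℕ}
    (he : e ∈ ({![0,0,0], ![0,1,1], ![1,0,1], ![1,1,0]} : Finset (Fin 3 → ℕ)))
    (he' : e' ∈ ({![0,0,0], ![0,1,1], ![1,0,1], ![1,1,0]} : Finset (Fin 3 → ℕ)))
    (hne : e ≠ e') :
    chamberExcess α e + chamberExcess α e' < 0 := by
  fin_cases he <;> fin_cases he' <;> simp [chamberExcess, Fin.sum_univ_three] at hne ⊢ <;>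
    linarith [(hα 0).1, (hα 0).2, (hα 1).1, (hα 1).2, (hα 2).1, (hα 2).2]

theorem Finset.forall_lt_or_exists_gt_or_exists_eq {ι β : Type*} [LinearOrder β]
    (s : Finset ι) (a b : ι → β) :
    (∀ i ∈ s, a i < b i) ∨ (∃ i ∈ s, b i < a i) ∨ (∃ i ∈ s, a i = b i) := by
  by_contra! h
  obtain ⟨⟨i, hi, hab⟩, hgt, hne⟩ := h
  exact (hab.lt_of_ne' (hne i hi)).not_ge (hgt i hi)

/-- For P¹ with 3 marked points: the five chambers C₀, C_e (e ∈ I) are pairwise disjoint,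
and together with the four walls H_e they cover the weight space W = (0,1/2)³. -/
theorem stmt_17 (α : Fin 3 → ℝ) (hα : ∀ i, 0 < α i ∧ α i < 1/2) :
    (∀ e ∈ ({![0,0,0], ![0,1,1], ![1,0,1], ![1,1,0]} : Finset (Fin 3 → ℕ)),
      ∀ e' ∈ ({![0,0,0], ![0,1,1], ![1,0,1], ![1,1,0]} : Finset (Fin 3 → ℕ)), e ≠ e' →
        ¬(1 + (∑ i, (e i : ℝ)) / 2 < ∑ i, ((e i : ℝ) + (-1 : ℝ) ^ (e i) * α i) ∧
          1 + (∑ i, (e' i : ℝ)) / 2 < ∑ i, ((e' i : ℝ) + (-1 : ℝ) ^ (e' i) * α i))) ∧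
    (∀ e ∈ ({![0,0,0], ![0,1,1], ![1,0,1], ![1,1,0]} : Finset (Fin 3 → ℕ)),
      ¬((∀ f ∈ ({![0,0,0], ![0,1,1], ![1,0,1], ![1,1,0]} : Finset (Fin 3 → ℕ)),
            ∑ i, ((f i : ℝ) + (-1 : ℝ) ^ (f i) * α i) < 1 + (∑ i, (f i : ℝ)) / 2) ∧
        1 + (∑ i, (e i : ℝ)) / 2 < ∑ i, ((e i : ℝ) + (-1 : ℝ) ^ (e i) * α i))) ∧
    ((∀ f ∈ ({![0,0,0], ![0,1,1], ![1,0,1], ![1,1,0]} : Finset (Fin 3 → ℕ)),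
        ∑ i, ((f i : ℝ) + (-1 : ℝ) ^ (f i) * α i) < 1 + (∑ i, (f i : ℝ)) / 2) ∨
      (∃ e ∈ ({![0,0,0], ![0,1,1], ![1,0,1], ![1,1,0]} : Finset (Fin 3 → ℕ)),
        1 + (∑ i, (e i : ℝ)) / 2 < ∑ i, ((e i : ℝ) + (-1 : ℝ) ^ (e i) * α i)) ∨
      (∃ e ∈ ({![0,0,0], ![0,1,1], ![1,0,1], ![1,1,0]} : Finset (Fin 3 → ℕ)),
        ∑ i, ((e i : ℝ) + (-1 : ℝ) ^ (e i) * α i) = 1 + (∑ i, (e i : ℝ)) / 2)) := by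
  refine ⟨?_, ?_, Finset.forall_lt_or_exists_gt_or_exists_eq _ _ _⟩
  · rintro e he e' he' hne ⟨h, h'⟩
    have hneg := chamberExcess_add_chamberExcess_neg hα he he' hne
    unfold chamberExcess at hneg
    linarith
  · rintro e he ⟨hall, h⟩
    exact (hall e he).asymm h
end
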